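/- Let M be a nonempty L-structure, I a nonempty set, and F a (proper) filter on I. Then the diagonal map δ : M → M^I/F into the reduced power, sending a ∈ M to the class ⟨a⟩/F of the constant I-sequence with value a, is a pure L-embedding: δ is injective and for every existential-positive L-formula φ(v̄) and every tuple ā from M, M ⊨ φ[ā] if and only if M^I/F ⊨ φ[δ(ā)]. -/

import Mathlib

/-!
Existential-positive formulas are preserved by every homomorphism, and the diagonal map is one.
Conversely, over any filter, an existential-positive formula that holds in the reduced product at
the classes of some sequences holds coordinatewise on an `F`-large set: this half of Łoś's theorem
needs an ultrafilter only to handle negation. For constant sequences the large set is nonempty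
because `F` is proper, which gives reflection.
-/

open FirstOrder Language Filter Structure

universe u v w

namespace FirstOrder.Language.BoundedFormula

variable {L : FirstOrder.Language.{u, v}} {α : Type*}

/-- Existential-positive formulas: built from atomic formulas using `⊓`, `⊔` and `∃`. -/
inductive IsExistentialPositive : ∀ {n : ℕ}, L.BoundedFormula α n → Prop
  | equal {n : ℕ} (t₁ t₂ : L.Term (α ⊕ Fin n)) : IsExistentialPositive (t₁.bdEqual t₂)
  | rel {n k : ℕ} (R : L.Relations k) (ts : Fin k → L.Term (α ⊕ Fin n)) :
      IsExistentialPositive (R.boundedFormula ts)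
  | inf {n : ℕ} {φ ψ : L.BoundedFormula α n} :
      IsExistentialPositive φ → IsExistentialPositive ψ → IsExistentialPositive (φ ⊓ ψ)
  | sup {n : ℕ} {φ ψ : L.BoundedFormula α n} :
      IsExistentialPositive φ → IsExistentialPositive ψ → IsExistentialPositive (φ ⊔ ψ)
  | ex {n : ℕ} {φ : L.BoundedFormula α (n + 1)} :
      IsExistentialPositive φ → IsExistentialPositive φ.ex

end FirstOrder.Language.BoundedFormula

namespace ReducedPower

variable {L : FirstOrder.Language.{u, v}} {I : Type*} (M : I → Type*)
  [∀ i, L.Structure (M i)] (F : Filter I)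

/-- The reduced-product prestructure on the product, relative to the filter `F`. -/
instance prestructure : L.Prestructure (F.productSetoid M) :=
  { F.productSetoid M with
    toStructure :=
      { funMap := fun {_} f x a => funMap f fun i => x i a
        RelMap := fun {_} r x => ∀ᶠ a in F, RelMap r fun i => x i a }
    fun_equiv := fun {n} f x y xy => by
      refine mem_of_superset (iInter_mem.2 xy) fun a ha => ?_
      simp only [Set.mem_iInter, Set.mem_setOf_eq] at ha
      simp only [Set.mem_setOf_eq, ha]
    rel_equiv := fun {n} r x y xy => by
      rw [← iff_eq_eq]
      refine ⟨fun hx => ?_, fun hy => ?_⟩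
      · refine mem_of_superset (inter_mem hx (iInter_mem.2 xy)) ?_
        rintro a ⟨ha1, ha2⟩
        simp only [Set.mem_iInter, Set.mem_setOf_eq] at *
        rw [← funext ha2]
        exact ha1
      · refine mem_of_superset (inter_mem hy (iInter_mem.2 xy)) ?_
        rintro a ⟨ha1, ha2⟩
        simp only [Set.mem_iInter, Set.mem_setOf_eq] at *
        rw [funext ha2]
        exact ha1 }

/-- The reduced product `L`-structure on `F.Product M`. -/
instance productStructure : L.Structure (F.Product M) :=
  Language.quotientStructure

end ReducedPower

namespace FirstOrder.Language.BoundedFormula.IsExistentialPositive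

variable {L : FirstOrder.Language.{u, v}} {M N : Type*} [L.Structure M] [L.Structure N]
  {α : Type*}

theorem realize_hom {n : ℕ} {φ : L.BoundedFormula α n} (hφ : φ.IsExistentialPositive)
    (f : M →[L] N) {v : α → M} {xs : Fin n → M} :
    φ.Realize v xs → φ.Realize (f ∘ v) (f ∘ xs) := by
  induction hφ with
  | equal t₁ t₂ =>
    simp only [realize_bdEqual, ← Sum.comp_elim, HomClass.realize_term]
    exact congrArg f
  | rel R ts =>
    simp only [realize_rel, ← Sum.comp_elim, HomClass.realize_term]
    exact f.map_rel R _
  | inf _ _ ih₁ ih₂ =>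
    simp only [realize_inf]
    exact And.imp ih₁ ih₂
  | sup _ _ ih₁ ih₂ =>
    simp only [realize_sup]
    exact Or.imp ih₁ ih₂
  | ex _ ih =>
    simp only [realize_ex]
    rintro ⟨a, ha⟩
    exact ⟨f a, by simpa only [Fin.comp_snoc] using ih ha⟩

theorem realize_formula_hom {φ : L.Formula α} (hφ : φ.IsExistentialPositive)
    (f : M →[L] N) {v : α → M} (h : φ.Realize v) : φ.Realize (f ∘ v) := by
  have := hφ.realize_hom f h
  rwa [Subsingleton.elim (f ∘ default) default] at this

end FirstOrder.Language.BoundedFormula.IsExistentialPositive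

namespace ReducedPower

variable {L : FirstOrder.Language.{u, v}} {I : Type*} {M : I → Type*}
  [∀ i, L.Structure (M i)] {F : Filter I}

theorem funMap_cast {n : ℕ} (f : L.Functions n) (x : Fin n → ∀ i, M i) :
    (funMap f fun k => (x k : F.Product M)) = (fun i => funMap f fun k => x k i : F.Product M) :=
  funMap_quotient_mk' _ f x

theorem relMap_cast {n : ℕ} (r : L.Relations n) (x : Fin n → ∀ i, M i) :
    (RelMap r fun k => (x k : F.Product M)) ↔ ∀ᶠ i in F, RelMap r fun k => x k i :=
  relMap_quotient_mk' _ r x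

theorem term_realize_cast {β : Type*} (x : β → ∀ i, M i) (t : L.Term β) :
    (t.realize fun b => (x b : F.Product M)) =
      (fun i => t.realize fun b => x b i : F.Product M) := by
  induction t with
  | var => rfl
  | func f ts ih => simp only [Term.realize, ih, funMap_cast]

theorem sum_elim_cast {β : Type*} {n : ℕ} (x : β → ∀ i, M i) (v : Fin n → ∀ i, M i) :
    Sum.elim (fun b => (x b : F.Product M)) (fun k => (v k : F.Product M)) =
      fun p => ((Sum.elim x v p : ∀ i, M i) : F.Product M) := by
  ext (_ | _) <;> rfl

theorem snoc_cast {n : ℕ} (v : Fin n → ∀ i, M i) (g : ∀ i, M i) :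
    Fin.snoc (fun k => (v k : F.Product M)) (g : F.Product M) =
      fun k => ((Fin.snoc (α := fun _ => ∀ i, M i) v g k : ∀ i, M i) : F.Product M) :=
  (Fin.comp_snoc _ v g).symm

theorem eventually_realize_of_realize_cast {β : Type*} {n : ℕ} {φ : L.BoundedFormula β n}
    (hφ : φ.IsExistentialPositive) (x : β → ∀ i, M i) (v : Fin n → ∀ i, M i) :
    φ.Realize (fun b => (x b : F.Product M)) (fun k => (v k : F.Product M)) →
      ∀ᶠ i in F, φ.Realize (fun b => x b i) (fun k => v k i) := by
  have hcoord : ∀ {n : ℕ} (v : Fin n → ∀ i, M i) (i : I),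
      Sum.elim (fun b => x b i) (fun k => v k i) = fun p => Sum.elim x v p i := by
    intro n v i; ext (_ | _) <;> rfl
  induction hφ with
  | equal t₁ t₂ =>
    simp only [BoundedFormula.realize_bdEqual, sum_elim_cast, term_realize_cast, hcoord]
    exact Quotient.exact'
  | rel R ts =>
    simp only [BoundedFormula.realize_rel, sum_elim_cast, term_realize_cast, hcoord]
    exact (relMap_cast R _).mp
  | inf _ _ ih₁ ih₂ =>
    simp only [BoundedFormula.realize_inf]
    exact fun h => (ih₁ v h.1).and (ih₂ v h.2)
  | sup _ _ ih₁ ih₂ =>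
    simp only [BoundedFormula.realize_sup]
    rintro (h | h)
    · exact (ih₁ v h).mono fun _ => Or.inl
    · exact (ih₂ v h).mono fun _ => Or.inr
  | ex _ ih =>
    simp only [BoundedFormula.realize_ex]
    rintro ⟨c, hc⟩
    obtain ⟨g, rfl⟩ : ∃ g : ∀ i, M i, (g : F.Product M) = c := Quotient.exists_rep c
    rw [snoc_cast] at hc
    refine (ih (Fin.snoc v g) hc).mono fun i hi => ⟨g i, ?_⟩
    exact Fin.comp_snoc (fun h : ∀ i, M i => h i) v g ▸ hi

theorem eventually_realize_formula_of_realize_cast {β : Type*} {φ : L.Formula β}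
    (hφ : φ.IsExistentialPositive) (x : β → ∀ i, M i)
    (h : φ.Realize fun b => (x b : F.Product M)) : ∀ᶠ i in F, φ.Realize fun b => x b i := by
  have := eventually_realize_of_realize_cast hφ x default
    (by rwa [Subsingleton.elim (fun k => ((default : Fin 0 → ∀ i, M i) k : F.Product M)) default])
  exact this.mono fun i hi => by
    rwa [Subsingleton.elim (fun k => (default : Fin 0 → ∀ i, M i) k i) default] at hi

variable (L) (F) (N : Type*) [L.Structure N]

def diagonal : N →[L] F.Product fun _ : I => N where
  toFun a := ((fun _ : I => a) : F.Product fun _ : I => N)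
  map_fun' f x := (funMap_cast f fun k _ => x k).symm
  map_rel' r x h := (relMap_cast r fun k _ => x k).mpr (Eventually.of_forall fun _ => h)

theorem diagonal_injective [F.NeBot] : Function.Injective (diagonal L F N) :=
  fun _ _ h => eventually_const.mp (Quotient.exact' h)

end ReducedPower

theorem diagonal_pure_embedding_general {L : FirstOrder.Language.{u, v}} {M : Type*} [L.Structure M]
    {I : Type w} (F : Filter I) [F.NeBot] :
    Function.Injective
      (fun a : M => ((fun _ : I => a) : F.Product (fun _ : I => M))) ∧
    ∀ {n : ℕ} (φ : L.Formula (Fin n)), φ.IsExistentialPositive →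
      ∀ a : Fin n → M, φ.Realize a ↔
        φ.Realize (fun p => ((fun _ : I => a p) : F.Product (fun _ : I => M))) := by
  refine ⟨ReducedPower.diagonal_injective L F M, fun φ hφ a => ⟨fun h => ?_, fun h => ?_⟩⟩
  · exact hφ.realize_formula_hom (ReducedPower.diagonal L F M) h
  · exact eventually_const.mp
      (ReducedPower.eventually_realize_formula_of_realize_cast hφ (fun p _ => a p) h)

/-- The diagonal map `δ : M → M^I/F` into a reduced power of a nonempty structure `M` by a proper
filter `F`, sending `a` to the class of the constant `I`-sequence with value `a`, is a pure
`L`-embedding: it is injective and it preserves and reflects the satisfaction of all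
existential-positive formulas. -/
theorem diagonal_pure_embedding {L : FirstOrder.Language.{u, v}} {M : Type*} [L.Structure M]
    [Nonempty M] {I : Type w} [Nonempty I] (F : Filter I) [F.NeBot] :
    Function.Injective
      (fun a : M => ((fun _ : I => a) : F.Product (fun _ : I => M))) ∧
    ∀ {n : ℕ} (φ : L.Formula (Fin n)), φ.IsExistentialPositive →
      ∀ a : Fin n → M, φ.Realize a ↔
        φ.Realize (fun p => ((fun _ : I => a p) : F.Product (fun _ : I => M))) :=
  diagonal_pure_embedding_general F
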